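/- arXiv:math/0106194 — 3 statements merged into one kernel-verified Lean document; each statement's English description precedes it below -/
import Mathlib

section
/- For the scaled resonant system İ = ε(−2αI + 2β√I cos θ), θ̇ = −2(I − ω²) − εβ sin θ/√I with 0 < αω < β and ε small, there is a fixed point (I, θ) with cos θ = α√I/β, θ ∈ (0, π/2), and I = ω² − ε(1/(2ω))√(β² − α²ω²) + O(ε²). More precisely: for every sufficiently small ε > 0 there exists a fixed point (I_ε, θ_ε) with θ_ε ∈ (0, π/2), cos θ_ε = α√(I_ε)/β, and |I_ε − ω² + ε√(β² − α²ω²)/(2ω)| ≤ Cε² for some constant C independent of ε. -/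
set_option maxHeartbeats 1000000

/-- For `0 < αω < β` there exist `C > 0` and `ε₀ > 0` such that for every
`ε ∈ (0, ε₀)` the system `İ = ε(−2αI + 2β√I cos θ)`, `θ̇ = −2(I − ω²) − εβ sin θ/√I`
has a fixed point `(I_ε, θ_ε)` with `I_ε > 0`, `θ_ε ∈ (0, π/2)`, `cos θ_ε = α√(I_ε)/β`,
and `|I_ε − ω² + ε √(β² − α²ω²)/(2ω)| ≤ C ε²` (i.e. the saddle `Q_ε` of the paper,
`I = ω² − ε √(β² − α²ω²)/(2ω) + O(ε²)`). -/
theorem saddle_Qeps (ω α β : ℝ) (hω : 0 < ω) (hα : 0 < α) (hβ : 0 < β) (h : α * ω < β) :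
    ∃ C > 0, ∃ ε₀ > 0, ∀ ε : ℝ, 0 < ε → ε < ε₀ →
      ∃ Iv θ : ℝ, 0 < Iv ∧ θ ∈ Set.Ioo (0 : ℝ) (Real.pi / 2) ∧
        Real.cos θ = α * Real.sqrt Iv / β ∧
        ε * (-2 * α * Iv + 2 * β * Real.sqrt Iv * Real.cos θ) = 0 ∧
        -2 * (Iv - ω ^ 2) - ε * β * Real.sin θ / Real.sqrt Iv = 0 ∧
        |Iv - ω ^ 2 + ε * Real.sqrt (β ^ 2 - α ^ 2 * ω ^ 2) / (2 * ω)| ≤ C * ε ^ 2 := by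
  have hβ2 : α ^ 2 * ω ^ 2 < β ^ 2 := by nlinarith [mul_pos (sub_pos.2 h) (show (0:ℝ) < β + α * ω by positivity)]
  set a := Real.sqrt (β ^ 2 - α ^ 2 * ω ^ 2) with ha_def
  have ha2 : a ^ 2 = β ^ 2 - α ^ 2 * ω ^ 2 := Real.sq_sqrt (by nlinarith)
  have ha : 0 < a := Real.sqrt_pos.2 (by nlinarith)
  set M : ℝ := 2 * β / ω with hM_def
  have hM : 0 < M := by positivity
  refine ⟨M * (α ^ 2 * ω / a + β / ω) / ω ^ 2, by positivity, ω ^ 3 / (8 * β), by positivity,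
    ?_⟩
  intro ε hε hε'
  have hMε : M * ε < ω ^ 2 / 4 := by
    rw [hM_def]
    rw [div_mul_eq_mul_div, div_lt_div_iff₀ hω (by norm_num)]
    have := mul_lt_mul_of_pos_left hε' (show (0:ℝ) < 2 * β by positivity)
    rw [lt_div_iff₀ (by positivity)] at hε'
    nlinarith
  set F : ℝ → ℝ := fun I => 2 * (ω ^ 2 - I) - ε * (Real.sqrt (β ^ 2 - α ^ 2 * I) / Real.sqrt I)
    with hF_def
  have hlow : ω ^ 2 / 2 < ω ^ 2 - M * ε := by nlinarith
  have hcont : ContinuousOn F (Set.Icc (ω ^ 2 - M * ε) (ω ^ 2)) := by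
    apply ContinuousOn.sub
    · exact Continuous.continuousOn (by continuity)
    · apply ContinuousOn.mul continuousOn_const
      apply ContinuousOn.div
      · exact (Real.continuous_sqrt.comp (by continuity)).continuousOn
      · exact Real.continuous_sqrt.continuousOn
      · intro x hx
        have hx0 : 0 < x := by
          have := hx.1
          nlinarith
        exact ne_of_gt (Real.sqrt_pos.2 hx0)
  have hFb : F (ω ^ 2) < 0 := by
    have hsq : Real.sqrt (ω ^ 2) = ω := Real.sqrt_sq hω.le
    have : F (ω ^ 2) = -(ε * (a / ω)) := by
      simp only [hF_def, hsq]
      ring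
    rw [this]
    have : 0 < ε * (a / ω) := by positivity
    linarith
  have hFa : 0 < F (ω ^ 2 - M * ε) := by
    set J := ω ^ 2 - M * ε with hJ
    have hJ0 : 0 < J := by nlinarith
    have hnum : Real.sqrt (β ^ 2 - α ^ 2 * J) ≤ β :=
      (Real.sqrt_le_sqrt (by nlinarith : β ^ 2 - α ^ 2 * J ≤ β ^ 2)).trans_eq
        (Real.sqrt_sq hβ.le)
    have hden : ω / 2 ≤ Real.sqrt J := by
      rw [Real.le_sqrt (by positivity) hJ0.le]
      nlinarith
    have hg : Real.sqrt (β ^ 2 - α ^ 2 * J) / Real.sqrt J ≤ M := by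
      rw [hM_def, show 2 * β / ω = β / (ω / 2) by ring]
      exact div_le_div₀ hβ.le hnum (by positivity) hden
    have : F J = 2 * (M * ε) - ε * (Real.sqrt (β ^ 2 - α ^ 2 * J) / Real.sqrt J) := by
      simp only [hF_def, hJ]; ring
    rw [this]
    nlinarith
  have hmem : (0:ℝ) ∈ F '' Set.Ioo (ω ^ 2 - M * ε) (ω ^ 2) :=
    intermediate_value_Ioo' (by nlinarith : ω ^ 2 - M * ε ≤ ω ^ 2) hcont ⟨hFb, hFa⟩
  obtain ⟨I, hIoo, hFI⟩ := hmem
  obtain ⟨hI1, hI2⟩ := hIoo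
  have hI0 : 0 < I := by nlinarith
  set s := Real.sqrt I with hs_def
  have hs : 0 < s := Real.sqrt_pos.2 hI0
  have hs2 : s ^ 2 = I := Real.sq_sqrt hI0.le
  have hsω : s < ω := by
    rw [hs_def, show ω = Real.sqrt (ω ^ 2) from (Real.sqrt_sq hω.le).symm]
    exact Real.sqrt_lt_sqrt hI0.le hI2
  have hshalf : ω / 2 ≤ s := by
    rw [hs_def, Real.le_sqrt (by positivity) hI0.le]
    nlinarith
  have hbI : 0 < β ^ 2 - α ^ 2 * I := by nlinarith
  set b := Real.sqrt (β ^ 2 - α ^ 2 * I) with hb_def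
  have hb : 0 < b := Real.sqrt_pos.2 hbI
  have hb2 : b ^ 2 = β ^ 2 - α ^ 2 * I := Real.sq_sqrt hbI.le
  have hbβ : b ≤ β := by nlinarith
  -- the angle
  set x := α * s / β with hx_def
  have hx0 : 0 < x := by positivity
  have hx1 : x < 1 := by
    rw [hx_def, div_lt_one hβ]
    nlinarith
  refine ⟨I, Real.arccos x, hI0,
    ⟨Real.arccos_pos.2 hx1, Real.arccos_lt_pi_div_two.2 hx0⟩,
    ?_, ?_, ?_, ?_⟩
  · rw [Real.cos_arccos (by linarith) hx1.le]
  · rw [Real.cos_arccos (by linarith) hx1.le, hx_def]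
    have h2 : 2 * β * s * (α * s / β) = 2 * α * I := by
      rw [← hs2]; field_simp
    rw [show Real.sqrt I = s from hs_def.symm, h2]
    ring
  · have hsin : Real.sin (Real.arccos x) = b / β := by
      rw [Real.sin_arccos]
      have : 1 - x ^ 2 = (β ^ 2 - α ^ 2 * I) / β ^ 2 := by
        rw [hx_def, ← hs2]
        field_simp
      rw [this, Real.sqrt_div hbI.le, Real.sqrt_sq hβ.le, ← hb_def]
    rw [hsin, show Real.sqrt I = s from hs_def.symm]
    have hFI' : 2 * (ω ^ 2 - I) - ε * (b / s) = 0 := hFI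
    have : ε * β * (b / β) / s = ε * (b / s) := by
      field_simp
    rw [this]
    linarith
  · have hFI' : I - ω ^ 2 = -(ε * (b / s)) / 2 := by
      have : 2 * (ω ^ 2 - I) - ε * (b / s) = 0 := hFI
      linarith
    have key : I - ω ^ 2 + ε * a / (2 * ω) = ε / 2 * (a / ω - b / s) := by
      rw [hFI']; ring
    rw [key, abs_mul, abs_of_pos (by positivity : (0:ℝ) < ε / 2)]
    -- Lipschitz-type bound on the difference
    have hΔ : 0 ≤ ω ^ 2 - I := by linarith
    have hΔM : ω ^ 2 - I ≤ M * ε := by linarith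
    have e1 : |a - b| ≤ α ^ 2 * (ω ^ 2 - I) / a := by
      rw [le_div_iff₀ ha]
      have h1 : |a - b| * (a + b) = α ^ 2 * (ω ^ 2 - I) := by
        rw [← abs_of_pos (show (0:ℝ) < a + b by positivity), ← abs_mul,
          show (a - b) * (a + b) = α ^ 2 * (I - ω ^ 2) by linear_combination ha2 - hb2,
          abs_of_nonpos (mul_nonpos_of_nonneg_of_nonpos (sq_nonneg α) (by linarith))]
        ring
      have h2 : |a - b| * a ≤ |a - b| * (a + b) :=
        mul_le_mul_of_nonneg_left (by linarith) (abs_nonneg _)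
      linarith
    have e2 : |s - ω| ≤ (ω ^ 2 - I) / ω := by
      rw [le_div_iff₀ hω]
      have h1 : |s - ω| * (s + ω) = ω ^ 2 - I := by
        rw [← abs_of_pos (show (0:ℝ) < s + ω by positivity), ← abs_mul,
          show (s - ω) * (s + ω) = I - ω ^ 2 by linear_combination hs2,
          abs_of_nonpos (by linarith)]
        ring
      have h2 : |s - ω| * ω ≤ |s - ω| * (s + ω) :=
        mul_le_mul_of_nonneg_left (by linarith) (abs_nonneg _)
      linarith
    have e3 : |a * s - b * ω| ≤ (α ^ 2 * (ω ^ 2 - I) / a) * ω + β * ((ω ^ 2 - I) / ω) := by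
      calc |a * s - b * ω| = |(a - b) * s + b * (s - ω)| := by ring_nf
        _ ≤ |(a - b) * s| + |b * (s - ω)| := abs_add_le _ _
        _ = |a - b| * s + b * |s - ω| := by
            rw [abs_mul, abs_mul, abs_of_pos hs, abs_of_pos hb]
        _ ≤ (α ^ 2 * (ω ^ 2 - I) / a) * ω + β * ((ω ^ 2 - I) / ω) := by
            have t1 : |a - b| * s ≤ (α ^ 2 * (ω ^ 2 - I) / a) * ω :=
              mul_le_mul e1 hsω.le hs.le (by positivity)
            have t2 : b * |s - ω| ≤ β * ((ω ^ 2 - I) / ω) :=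
              mul_le_mul hbβ e2 (abs_nonneg _) hβ.le
            linarith
    have e4 : |a / ω - b / s| ≤
        ((α ^ 2 * (ω ^ 2 - I) / a) * ω + β * ((ω ^ 2 - I) / ω)) / (ω * (ω / 2)) := by
      have hsub : a / ω - b / s = (a * s - b * ω) / (ω * s) := by
        field_simp
      rw [hsub, abs_div, abs_of_pos (by positivity : (0:ℝ) < ω * s)]
      exact div_le_div₀ (by positivity) e3 (by positivity)
        (by nlinarith)
    have e5 : |a / ω - b / s| ≤ (M * ε) * (α ^ 2 * ω / a + β / ω) * (2 / ω ^ 2) := by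
      refine e4.trans ?_
      have mono : (α ^ 2 * (ω ^ 2 - I) / a) * ω + β * ((ω ^ 2 - I) / ω)
          ≤ (α ^ 2 * (M * ε) / a) * ω + β * ((M * ε) / ω) := by
        have c1 : α ^ 2 * (ω ^ 2 - I) / a ≤ α ^ 2 * (M * ε) / a := by
          gcongr
        have c2 : (ω ^ 2 - I) / ω ≤ (M * ε) / ω := by
          gcongr
        have := mul_le_mul_of_nonneg_right c1 hω.le
        have := mul_le_mul_of_nonneg_left c2 hβ.le
        linarith
      calc ((α ^ 2 * (ω ^ 2 - I) / a) * ω + β * ((ω ^ 2 - I) / ω)) / (ω * (ω / 2))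
          ≤ ((α ^ 2 * (M * ε) / a) * ω + β * ((M * ε) / ω)) / (ω * (ω / 2)) := by
            gcongr
        _ = (M * ε) * (α ^ 2 * ω / a + β / ω) * (2 / ω ^ 2) := by
            field_simp
    calc ε / 2 * |a / ω - b / s|
        ≤ ε / 2 * ((M * ε) * (α ^ 2 * ω / a + β / ω) * (2 / ω ^ 2)) :=
          mul_le_mul_of_nonneg_left e5 (by positivity)
      _ = M * (α ^ 2 * ω / a + β / ω) / ω ^ 2 * ε ^ 2 := by
          field_simp
end

section
/- The eigenvalues of the linear operator L_ε defined by L_ε f = −i f_xx + ε(−αf + f_xx) − 2iω²(f + f̄) acting on zero-mean 2π-periodic functions (as a real-linear operator, restricted to the real Fourier modes cos kx, sin kx) are μ_k^± = −ε(α + k²) ± k√(4ω² − k²) for integers k ≥ 1 when k ≤ 2ω, and complex with real part −ε(α + k²) when k > 2ω. In particular, for ω ∈ (1/2, 1), exactly μ₁^± are real; for ω ∈ (1, 3/2), exactly μ₁^± and μ₂^± are real. -/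
lemma spec_iff_aux (a b c μ : ℂ) :
    μ ∈ spectrum ℂ (!![a, b; c, a] : Matrix (Fin 2) (Fin 2) ℂ) ↔ (μ - a) ^ 2 = b * c := by
  rw [spectrum.mem_iff, Matrix.isUnit_iff_isUnit_det, isUnit_iff_ne_zero, not_ne_iff]
  have h : (algebraMap ℂ (Matrix (Fin 2) (Fin 2) ℂ) μ) - !![a, b; c, a]
      = !![μ - a, -b; -c, μ - a] := by
    ext i j
    fin_cases i <;> fin_cases j <;>
      simp [Matrix.algebraMap_matrix_apply]
  rw [h, Matrix.det_fin_two_of]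
  constructor <;> intro h <;> ring_nf <;> ring_nf at h <;> linear_combination h

/-- On the real-2D invariant subspace spanned by `cos kx` (coordinates
`(a,b)` for `f = (a+ib) cos kx`), the operator
`L_ε f = −i f_xx + ε(−αf + f_xx) − 2iω²(f + f̄)` acts by the real matrix
`[[−ε(α+k²), −k²], [k² − 4ω², −ε(α+k²)]]`.  Its eigenvalues are
`μ_k^± = −ε(α+k²) ± k√(4ω² − k²)` (real) for `k ≤ 2ω`, while for `k > 2ω` every
eigenvalue has real part `−ε(α+k²)`.  In particular for `ω ∈ (1/2, 1)` exactly the `k = 1`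
modes give real eigenvalues, and for `ω ∈ (1, 3/2)` exactly the `k = 1, 2` modes do. -/
theorem Leps_eigenvalues (ω α ε : ℝ) (hω : 0 < ω) (hα : 0 < α) (hε : 0 ≤ ε) :
    (∀ k : ℕ, 1 ≤ k →
      ∀ M : Matrix (Fin 2) (Fin 2) ℂ,
        M = !![((-ε * (α + (k : ℝ) ^ 2) : ℝ) : ℂ), -(k : ℂ) ^ 2;
               (k : ℂ) ^ 2 - 4 * (ω : ℂ) ^ 2, ((-ε * (α + (k : ℝ) ^ 2) : ℝ) : ℂ)] →
        (((k : ℝ) ≤ 2 * ω →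
            ((-ε * (α + (k : ℝ) ^ 2) + k * Real.sqrt (4 * ω ^ 2 - (k : ℝ) ^ 2) : ℝ) : ℂ)
              ∈ spectrum ℂ M ∧
            ((-ε * (α + (k : ℝ) ^ 2) - k * Real.sqrt (4 * ω ^ 2 - (k : ℝ) ^ 2) : ℝ) : ℂ)
              ∈ spectrum ℂ M) ∧
         (2 * ω < (k : ℝ) → ∀ μ ∈ spectrum ℂ M, μ.re = -ε * (α + (k : ℝ) ^ 2)))) ∧
    ((1 / 2 < ω ∧ ω < 1) → ∀ k : ℕ, 1 ≤ k → ((k : ℝ) ≤ 2 * ω ↔ k = 1)) ∧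
    ((1 < ω ∧ ω < 3 / 2) → ∀ k : ℕ, 1 ≤ k → ((k : ℝ) ≤ 2 * ω ↔ k = 1 ∨ k = 2)) := by
  refine ⟨?_, ?_, ?_⟩
  · intro k hk M hM
    subst hM
    constructor
    · intro hkω
      have hnn : (0 : ℝ) ≤ 4 * ω ^ 2 - (k : ℝ) ^ 2 := by nlinarith
      have hsq : Real.sqrt (4 * ω ^ 2 - (k : ℝ) ^ 2) ^ 2 = 4 * ω ^ 2 - (k : ℝ) ^ 2 :=
        Real.sq_sqrt hnn
      constructor <;>
      · rw [spec_iff_aux]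
        have : ((-ε * (α + (k : ℝ) ^ 2) + k * Real.sqrt (4 * ω ^ 2 - (k : ℝ) ^ 2) : ℝ) : ℂ)
            = ((-ε * (α + (k : ℝ) ^ 2) : ℝ) : ℂ)
              + ((k * Real.sqrt (4 * ω ^ 2 - (k : ℝ) ^ 2) : ℝ) : ℂ) := by push_cast; ring
        have key : (((k : ℝ) * Real.sqrt (4 * ω ^ 2 - (k : ℝ) ^ 2) : ℝ) : ℂ) ^ 2
            = -(k : ℂ) ^ 2 * ((k : ℂ) ^ 2 - 4 * (ω : ℂ) ^ 2) := by
          have : ((k : ℝ) * Real.sqrt (4 * ω ^ 2 - (k : ℝ) ^ 2)) ^ 2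
              = (k : ℝ) ^ 2 * (4 * ω ^ 2 - (k : ℝ) ^ 2) := by
            rw [mul_pow, hsq]
          calc (((k : ℝ) * Real.sqrt (4 * ω ^ 2 - (k : ℝ) ^ 2) : ℝ) : ℂ) ^ 2
              = ((((k : ℝ) * Real.sqrt (4 * ω ^ 2 - (k : ℝ) ^ 2)) ^ 2 : ℝ) : ℂ) := by push_cast; ring
            _ = (((k : ℝ) ^ 2 * (4 * ω ^ 2 - (k : ℝ) ^ 2) : ℝ) : ℂ) := by rw [this]
            _ = -(k : ℂ) ^ 2 * ((k : ℂ) ^ 2 - 4 * (ω : ℂ) ^ 2) := by push_cast; ring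
        · push_cast
          push_cast at key
          linear_combination key
    · intro hkω μ hμ
      rw [spec_iff_aux] at hμ
      set d : ℝ := -ε * (α + (k : ℝ) ^ 2) with hd
      set z : ℂ := μ - (d : ℂ) with hz
      have hc : z ^ 2 = (((k : ℝ) ^ 2 * (4 * ω ^ 2 - (k : ℝ) ^ 2) : ℝ) : ℂ) := by
        rw [hz, hμ]; push_cast; ring
      have hcneg : (k : ℝ) ^ 2 * (4 * ω ^ 2 - (k : ℝ) ^ 2) < 0 := by
        have hk1 : (1 : ℝ) ≤ (k : ℝ) := by exact_mod_cast hk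
        have h4 : 4 * ω ^ 2 < (k : ℝ) ^ 2 := by nlinarith
        nlinarith
      have him : z.re * z.im = 0 := by
        have := congrArg Complex.im hc
        simp [pow_two, Complex.mul_im] at this
        linarith
      have hre : z.re ^ 2 - z.im ^ 2 = (k : ℝ) ^ 2 * (4 * ω ^ 2 - (k : ℝ) ^ 2) := by
        have := congrArg Complex.re hc
        simpa [pow_two, Complex.mul_re] using this
      have hzre : z.re = 0 := by
        rcases mul_eq_zero.1 him with h | h
        · exact h
        · exfalso; rw [h] at hre; nlinarith
      have : μ.re = d + z.re := by rw [hz]; simp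
      rw [this, hzre, add_zero]
  · rintro ⟨h1, h2⟩ k hk
    constructor
    · intro hkle
      have : (k : ℝ) < 2 := by linarith
      have : k < 2 := by exact_mod_cast this
      omega
    · rintro rfl; push_cast; linarith
  · rintro ⟨h1, h2⟩ k hk
    constructor
    · intro hkle
      have : (k : ℝ) < 3 := by linarith
      have : k < 3 := by exact_mod_cast this
      omega
    · rintro (rfl | rfl) <;> push_cast <;> linarith
end

section
/- For k = 1, 2 with k < 2ω, the functions e_k^± = e^{±iϑ_k} cos kx with e^{±iϑ_k} = (k ∓ i√(4ω² − k²))/(2ω) are eigenfunctions of the real-linear operator L_ε f = −i f_xx + ε(−αf + f_xx) − 2iω²(f + f̄) with eigenvalues μ_k^± = −ε(α + k²) ± k√(4ω² − k²). Note e^{±iϑ_k} has modulus 1 since k² + (4ω² − k²) = 4ω². -/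
/-!
Since `cos (k x)` is an eigenfunction of `d²/dx²` with eigenvalue `-k²`, `L_ε` maps
`c cos (k x)` to `((i - ε) k² c - ε α c - 4 i ω² Re c) cos (k x)`. For `c = (k - i t) / (2ω)` with
`k² + t² = 4ω²` one has `|c| = 1`, `Re c = k / (2ω)` and `(k - i t)(k + i t) = 4ω²`, which turns the
bracket into `(-ε (α + k²) + k t) c`. The two eigenfunctions are the cases `t = ±√(4ω² - k²)`.
-/

open Complex ComplexConjugate

theorem hasDerivAt_ofReal_cos_mul (a x : ℝ) :
    HasDerivAt (fun x : ℝ => (Real.cos (a * x) : ℂ)) (-(a * Real.sin (a * x) : ℝ)) x := by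
  have := (((hasDerivAt_id x).const_mul a).cos).ofReal_comp
  simpa [mul_comm] using this

theorem hasDerivAt_ofReal_sin_mul (a x : ℝ) :
    HasDerivAt (fun x : ℝ => (Real.sin (a * x) : ℂ)) (a * Real.cos (a * x) : ℝ) x := by
  have := (((hasDerivAt_id x).const_mul a).sin).ofReal_comp
  simpa [mul_comm] using this

theorem deriv_deriv_const_mul_ofReal_cos_mul (c : ℂ) (a : ℝ) :
    deriv (deriv fun x : ℝ => c * (Real.cos (a * x) : ℂ)) =
      fun x => -(a : ℂ) ^ 2 * (c * (Real.cos (a * x) : ℂ)) := by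
  have h1 : deriv (fun x : ℝ => c * (Real.cos (a * x) : ℂ)) =
      fun x => -(c * a) * (Real.sin (a * x) : ℂ) := by
    funext x
    rw [((hasDerivAt_ofReal_cos_mul a x).const_mul c).deriv]
    push_cast; ring
  funext x
  rw [h1, ((hasDerivAt_ofReal_sin_mul a x).const_mul _).deriv]
  push_cast; ring

noncomputable def Leps (ω α ε : ℝ) (f : ℝ → ℂ) (x : ℝ) : ℂ :=
  -I * deriv (deriv f) x + (ε : ℂ) * (-(α : ℂ) * f x + deriv (deriv f) x)
    - 2 * I * (ω : ℂ) ^ 2 * (f x + conj (f x))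

theorem Leps_const_mul_cos (ω α ε : ℝ) (c : ℂ) (a x : ℝ) :
    Leps ω α ε (fun x => c * (Real.cos (a * x) : ℂ)) x =
      ((I - ε) * a ^ 2 * c - ε * α * c - 4 * I * ω ^ 2 * c.re) * Real.cos (a * x) := by
  have hre : c + conj c = 2 * c.re := by simpa using add_conj c
  simp only [Leps, deriv_deriv_const_mul_ofReal_cos_mul, map_mul, conj_ofReal]
  linear_combination (-2 * I * (ω : ℂ) ^ 2 * Real.cos (a * x)) * hre

theorem norm_sub_I_mul_div_eq_one {k t ω : ℝ} (hω : ω ≠ 0) (h : k ^ 2 + t ^ 2 = 4 * ω ^ 2) :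
    ‖((k : ℂ) - I * t) / (2 * ω)‖ = 1 := by
  rw [← pow_eq_one_iff_of_nonneg (n := 2) (norm_nonneg _) two_ne_zero, Complex.sq_norm,
    normSq_div, div_eq_one_iff_eq (by simpa using hω)]
  linear_combination (norm := (simp [normSq_apply]; ring)) h

theorem Leps_eigenfunction_of_sq_add_sq {ω k t : ℝ} (α ε : ℝ) (hω : ω ≠ 0)
    (h : k ^ 2 + t ^ 2 = 4 * ω ^ 2) (x : ℝ) :
    Leps ω α ε (fun x => ((k : ℂ) - I * t) / (2 * ω) * (Real.cos (k * x) : ℂ)) x =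
      ((-ε * (α + k ^ 2) + k * t : ℝ) : ℂ) * (((k : ℂ) - I * t) / (2 * ω) * Real.cos (k * x)) := by
  have hre : (((k : ℂ) - I * t) / (2 * ω)).re = k / (2 * ω) := by
    rw [show (2 * ω : ℂ) = ((2 * ω : ℝ) : ℂ) by push_cast; ring, Complex.div_ofReal_re]
    simp
  have hC : (k : ℂ) ^ 2 + (t : ℂ) ^ 2 = 4 * (ω : ℂ) ^ 2 := by exact_mod_cast h
  have hωC : (ω : ℂ) ≠ 0 := by exact_mod_cast hω
  rw [Leps_const_mul_cos, hre]
  generalize ((Real.cos (k * x) : ℝ) : ℂ) = C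
  push_cast
  field_simp
  linear_combination (I * k * C) * hC - k ^ 2 * t * C * I_sq

theorem Leps_eigenfunctions_general (ω α ε : ℝ)
    (k : ℕ) (h2ω : (k : ℝ) < 2 * ω)
    (Lε : (ℝ → ℂ) → ℝ → ℂ)
    (hL : Lε = fun f x =>
      -Complex.I * deriv (deriv f) x + (ε : ℂ) * (-(α : ℂ) * f x + deriv (deriv f) x)
        - 2 * Complex.I * (ω : ℂ) ^ 2 * (f x + (starRingEnd ℂ) (f x)))
    (cp cm : ℂ)
    (hcp : cp = ((k : ℂ) - Complex.I * (Real.sqrt (4 * ω ^ 2 - (k : ℝ) ^ 2) : ℂ)) / (2 * ω))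
    (hcm : cm = ((k : ℂ) + Complex.I * (Real.sqrt (4 * ω ^ 2 - (k : ℝ) ^ 2) : ℂ)) / (2 * ω))
    (ep em : ℝ → ℂ)
    (hep : ep = fun x => cp * (Real.cos (k * x) : ℂ))
    (hem : em = fun x => cm * (Real.cos (k * x) : ℂ)) :
    ‖cp‖ = 1 ∧ ‖cm‖ = 1 ∧
    (∀ x : ℝ, Lε ep x =
      ((-ε * (α + (k : ℝ) ^ 2) + k * Real.sqrt (4 * ω ^ 2 - (k : ℝ) ^ 2) : ℝ) : ℂ) * ep x) ∧
    (∀ x : ℝ, Lε em x =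
      ((-ε * (α + (k : ℝ) ^ 2) - k * Real.sqrt (4 * ω ^ 2 - (k : ℝ) ^ 2) : ℝ) : ℂ) * em x) := by
  have hω : ω ≠ 0 := (by linarith [k.cast_nonneg (α := ℝ)] : 0 < ω).ne'
  set s := √(4 * ω ^ 2 - (k : ℝ) ^ 2)
  have hs : (k : ℝ) ^ 2 + s ^ 2 = 4 * ω ^ 2 := by
    rw [Real.sq_sqrt (by nlinarith [k.cast_nonneg (α := ℝ)])]; ring
  have hs' : (k : ℝ) ^ 2 + (-s) ^ 2 = 4 * ω ^ 2 := by rwa [neg_sq]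
  have hcm' : cm = ((k : ℝ) - I * (-s : ℝ)) / (2 * ω) := by rw [hcm]; push_cast; ring
  rw [← Complex.ofReal_natCast] at hcp
  subst hL hcp hcm' hep hem
  refine ⟨norm_sub_I_mul_div_eq_one hω hs, norm_sub_I_mul_div_eq_one hω hs',
    fun x => ?_, fun x => ?_⟩
  · exact Leps_eigenfunction_of_sq_add_sq α ε hω hs x
  · rw [sub_eq_add_neg _ ((k : ℝ) * s), ← mul_neg]
    exact Leps_eigenfunction_of_sq_add_sq α ε hω hs' x

/-- For `k = 1, 2` with `k < 2ω`, the functions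
`e_k^± = e^{±iϑ_k} cos kx`, `e^{±iϑ_k} = (k ∓ i√(4ω² − k²))/(2ω)`, are eigenfunctions of
the real-linear operator `L_ε f = −i f_xx + ε(−αf + f_xx) − 2iω²(f + f̄)` with eigenvalues
`μ_k^± = −ε(α + k²) ± k√(4ω² − k²)`; moreover `|e^{±iϑ_k}| = 1`. -/
theorem Leps_eigenfunctions (ω α ε : ℝ) (hα : 0 < α) (hε : 0 ≤ ε)
    (k : ℕ) (hk : k = 1 ∨ k = 2) (h2ω : (k : ℝ) < 2 * ω)
    (Lε : (ℝ → ℂ) → ℝ → ℂ)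
    (hL : Lε = fun f x =>
      -Complex.I * deriv (deriv f) x + (ε : ℂ) * (-(α : ℂ) * f x + deriv (deriv f) x)
        - 2 * Complex.I * (ω : ℂ) ^ 2 * (f x + (starRingEnd ℂ) (f x)))
    (cp cm : ℂ)
    (hcp : cp = ((k : ℂ) - Complex.I * (Real.sqrt (4 * ω ^ 2 - (k : ℝ) ^ 2) : ℂ)) / (2 * ω))
    (hcm : cm = ((k : ℂ) + Complex.I * (Real.sqrt (4 * ω ^ 2 - (k : ℝ) ^ 2) : ℂ)) / (2 * ω))
    (ep em : ℝ → ℂ)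
    (hep : ep = fun x => cp * (Real.cos (k * x) : ℂ))
    (hem : em = fun x => cm * (Real.cos (k * x) : ℂ)) :
    ‖cp‖ = 1 ∧ ‖cm‖ = 1 ∧
    (∀ x : ℝ, Lε ep x =
      ((-ε * (α + (k : ℝ) ^ 2) + k * Real.sqrt (4 * ω ^ 2 - (k : ℝ) ^ 2) : ℝ) : ℂ) * ep x) ∧
    (∀ x : ℝ, Lε em x =
      ((-ε * (α + (k : ℝ) ^ 2) - k * Real.sqrt (4 * ω ^ 2 - (k : ℝ) ^ 2) : ℝ) : ℂ) * em x) :=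
  Leps_eigenfunctions_general ω α ε k h2ω Lε hL cp cm hcp hcm ep em hep hem
end
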